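/- arXiv:2105.13683 — 4 statements merged into one kernel-verified Lean document; each statement's English description precedes it below -/
import Mathlib

section
/- The time-elapse of a zone is a zone: if Z is a set of valuations defined by a finite conjunction of atomic constraints of the forms x ∼ c and x − y ∼ c (∼ ∈ {≤,≥,<,>}), then the set {v+δ | v ∈ Z, δ ∈ ℝ≥0} is also definable by such a conjunction (namely, by dropping all upper-bound constraints on single clocks while keeping difference constraints). -/
/-!
Waiting is eliminated Fourier–Motzkin style. For a fixed target valuation `w`, an atom holds
at `w - δ` on a ray of delays `δ` (a lower ray for `x ≤ k`, `x < k`, an upper ray for `x ≥ k`,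
`x > k`) or, for a difference constraint, on all or no delays. By Helly's theorem on the line,
finitely many such sets together with `δ ≥ 0` have a common point as soon as any two of them
meet, and two rays `w x - k ≤ δ` and `δ ≤ w y - k'` meet iff `x - y ≤ k - k'` holds at `w`.
-/

open Classical

/-- Clock valuations over a set `X` of clocks. -/
abbrev Val (X : Type*) := X → ℝ

/-- Delay a valuation by `δ`. -/
noncomputable def addD {X : Type*} (v : Val X) (δ : ℝ) : Val X := fun x => v x + δ

/-- Reset the clocks in `R` to `0`. -/
noncomputable def resetV {X : Type*} (R : Set X) (v : Val X) : Val X :=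
  fun x => if x ∈ R then 0 else v x

/-- Time elapse of a set of valuations. -/
def elapse {X : Type*} (Z : Set (Val X)) : Set (Val X) :=
  {w | ∃ v ∈ Z, ∃ δ : ℝ, 0 ≤ δ ∧ w = addD v δ}

/-- Zone successor under a guard `g` and reset set `R`. -/
def succZ {X : Type*} (g : Set (Val X)) (R : Set X) (Z : Set (Val X)) : Set (Val X) :=
  elapse (resetV R '' (g ∩ Z))

/-- Comparison operators `≤, ≥, <, >`. -/
inductive Cmp where
  | le | ge | lt | gt

def Cmp.sat : Cmp → ℝ → ℝ → Prop
  | .le, a, b => a ≤ b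
  | .ge, a, b => b ≤ a
  | .lt, a, b => a < b
  | .gt, a, b => b < a

/-- Atomic constraints `x ∼ c` and `x - y ∼ c` with integer constant `c`. -/
inductive Atom (X : Type*) where
  | single (x : X) (c : Cmp) (k : ℤ)
  | diff (x y : X) (c : Cmp) (k : ℤ)

def Atom.sat {X : Type*} (v : Val X) : Atom X → Prop
  | .single x c k => c.sat (v x) (k : ℝ)
  | .diff x y c k => c.sat (v x - v y) (k : ℝ)

/-- The set of valuations satisfying a finite conjunction of atomic constraints. -/
def satSet {X : Type*} (L : List (Atom X)) : Set (Val X) :=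
  {v | ∀ a ∈ L, a.sat v}

theorem Convex.helly_theorem_of_pairwise_inter {ι 𝕜 : Type*} [Field 𝕜] [LinearOrder 𝕜]
    [IsStrictOrderedRing 𝕜] {F : ι → Set 𝕜} {s : Finset ι} (hconv : ∀ i ∈ s, Convex 𝕜 (F i))
    (hpair : ∀ i ∈ s, ∀ j ∈ s, (F i ∩ F j).Nonempty) :
    (⋂ i ∈ s, F i).Nonempty := by
  refine Convex.helly_theorem' hconv fun I hIs hI => ?_
  rw [Module.finrank_self] at hI
  obtain h | h | h : I.card = 0 ∨ I.card = 1 ∨ I.card = 2 := by omega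
  · simp [Finset.card_eq_zero.1 h]
  · obtain ⟨i, rfl⟩ := Finset.card_eq_one.1 h
    simpa using hpair i (hIs (by simp)) i (hIs (by simp))
  · obtain ⟨i, j, -, rfl⟩ := Finset.card_eq_two.1 h
    simpa using hpair i (hIs (by simp)) j (hIs (by simp))

namespace Cmp

def dual : Cmp → Cmp
  | le => ge | ge => le | lt => gt | gt => lt

theorem sat_sub_iff (c : Cmp) (a b δ : ℝ) : c.sat (a - δ) b ↔ c.dual.sat δ (a - b) := by
  cases c <;> simp only [sat, dual] <;> constructor <;> intro <;> linarith

theorem sat_sub_sub_iff (c : Cmp) (a b k l : ℝ) :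
    c.sat (a - k) (b - l) ↔ c.sat (a - b) (k - l) := by
  cases c <;> simp only [sat] <;> constructor <;> intro <;> linarith

theorem convex_setOf_sat (c : Cmp) (p : ℝ) : Convex ℝ {δ | c.sat δ p} := by
  cases c
  exacts [convex_Iic p, convex_Ici p, convex_Iio p, convex_Ioi p]

theorem exists_sat (c : Cmp) (p : ℝ) : ∃ δ, c.sat δ p := by
  cases c
  exacts [⟨p, le_rfl⟩, ⟨p, le_rfl⟩, ⟨p - 1, sub_one_lt p⟩, ⟨p + 1, lt_add_one p⟩]

/-- The rays `{δ | c.sat δ p}` and `{δ | c'.sat δ q}` meet iff `p` and `q` are related by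
every comparison in `c.meet c'`; there is none when the rays point the same way. -/
def meet : Cmp → Cmp → Option Cmp
  | ge, le => some le | ge, lt => some lt | gt, le => some lt | gt, lt => some lt
  | le, ge => some ge | lt, ge => some gt | le, gt => some gt | lt, gt => some gt
  | _, _ => none

theorem exists_sat_and_sat_iff (c c' : Cmp) (p q : ℝ) :
    (∃ δ, c.sat δ p ∧ c'.sat δ q) ↔ ∀ d ∈ c.meet c', d.sat p q := by
  constructor
  · rintro ⟨δ, hp, hq⟩ d hd
    cases c <;> cases c' <;>
      simp only [meet, Option.mem_def, reduceCtorEq, Option.some.injEq] at hd <;>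
      subst hd <;> simp only [sat] at * <;> linarith
  · intro h
    cases c <;> cases c' <;>
      simp only [meet, Option.mem_def, Option.some.injEq, reduceCtorEq, sat, forall_eq',
        IsEmpty.forall_iff, implies_true] at h ⊢
    all_goals first
      | (refine ⟨(p + q) / 2, ?_, ?_⟩ <;> linarith)
      | (refine ⟨max p q + 1, ?_, ?_⟩ <;> linarith [le_max_left p q, le_max_right p q])
      | (refine ⟨min p q - 1, ?_, ?_⟩ <;> linarith [min_le_left p q, min_le_right p q])

end Cmp

section Elapse

variable {X : Type*}

open Set

theorem mem_elapse_iff {Z : Set (Val X)} {w : Val X} :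
    w ∈ elapse Z ↔ ∃ δ, 0 ≤ δ ∧ (fun x => w x - δ) ∈ Z := by
  constructor
  · rintro ⟨v, hv, δ, hδ, rfl⟩
    refine ⟨δ, hδ, ?_⟩
    simpa [addD] using hv
  · rintro ⟨δ, hδ, hv⟩
    exact ⟨_, hv, δ, hδ, funext fun x => by simp [addD]⟩

theorem satSet_append (L L' : List (Atom X)) : satSet (L ++ L') = satSet L ∩ satSet L' := by
  ext v
  simp [satSet, or_imp, forall_and]

theorem mem_satSet_flatMap {L : List (Atom X)} {f : Atom X → List (Atom X)} {w : Val X} :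
    w ∈ satSet (L.flatMap f) ↔ ∀ a ∈ L, w ∈ satSet (f a) := by
  simp only [satSet, mem_ofPred_eq, List.mem_flatMap]
  grind

namespace Atom

def delaySet (w : Val X) (a : Atom X) : Set ℝ := {δ | a.sat fun x => w x - δ}

theorem delaySet_single (w : Val X) (x : X) (c : Cmp) (k : ℤ) :
    (single x c k).delaySet w = {δ | c.dual.sat δ (w x - k)} := by
  ext δ
  exact c.sat_sub_iff _ _ _

theorem delaySet_diff (w : Val X) (x y : X) (c : Cmp) (k : ℤ) :
    (diff x y c k).delaySet w = {_δ | (diff x y c k).sat w} := by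
  ext δ
  simp [delaySet, sat]

theorem convex_delaySet (w : Val X) (a : Atom X) : Convex ℝ (a.delaySet w) := by
  cases a with
  | single x c k => rw [delaySet_single]; exact Cmp.convex_setOf_sat _ _
  | diff x y c k =>
    rw [delaySet_diff]
    by_cases h : (diff x y c k).sat w <;> simp [h, convex_univ, convex_empty]

def elapseConstraints : Atom X → List (Atom X)
  | single _ .le _ | single _ .lt _ => []
  | a => [a]

theorem mem_satSet_elapseConstraints (w : Val X) (a : Atom X) :
    w ∈ satSet a.elapseConstraints ↔ (Ici 0 ∩ a.delaySet w).Nonempty := by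
  cases a with
  | single x c k =>
    have := Cmp.exists_sat_and_sat_iff .ge c.dual 0 (w x - k)
    rw [delaySet_single]
    cases c <;>
      simp_all [Cmp.meet, Cmp.dual, Cmp.sat, elapseConstraints, satSet, Set.Nonempty, sat]
  | diff x y c k =>
    rw [delaySet_diff]
    simpa [elapseConstraints, satSet, Set.Nonempty] using fun _ => ⟨0, le_rfl⟩

def meetConstraints : Atom X → Atom X → List (Atom X)
  | single x c k, single y c' k' =>
    ((c.dual.meet c'.dual).map fun d => diff x y d (k - k')).toList
  | single .., b => [b]
  | a, single .. => [a]
  | a, b => [a, b]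

theorem mem_satSet_meetConstraints (w : Val X) (a b : Atom X) :
    w ∈ satSet (a.meetConstraints b) ↔ (a.delaySet w ∩ b.delaySet w).Nonempty := by
  cases a with
  | single x c k =>
    cases b with
    | single y c' k' =>
      have := Cmp.exists_sat_and_sat_iff c.dual c'.dual (w x - k) (w y - k')
      simp_all [delaySet_single, meetConstraints, satSet, Set.Nonempty, sat, Cmp.sat_sub_sub_iff]
    | diff y z c' k' =>
      simp [delaySet_single, delaySet_diff, meetConstraints, satSet, Set.Nonempty, Cmp.exists_sat]
  | diff x y c k =>
    cases b <;>
      simp [delaySet_single, delaySet_diff, meetConstraints, satSet, Set.Nonempty, Cmp.exists_sat]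

end Atom

theorem mem_elapse_satSet_iff (L : List (Atom X)) (w : Val X) :
    w ∈ elapse (satSet L) ↔ (∀ a ∈ L, (Ici 0 ∩ a.delaySet w).Nonempty) ∧
      ∀ a ∈ L, ∀ b ∈ L, (a.delaySet w ∩ b.delaySet w).Nonempty := by
  rw [mem_elapse_iff]
  constructor
  · rintro ⟨δ, hδ, hL⟩
    exact ⟨fun a ha => ⟨δ, hδ, hL a ha⟩, fun a ha b hb => ⟨δ, hL a ha, hL b hb⟩⟩
  · rintro ⟨hzero, hpair⟩
    let F : Option (Atom X) → Set ℝ := fun i => i.elim (Ici 0) (Atom.delaySet w)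
    obtain ⟨δ, hδ⟩ : (⋂ i ∈ Finset.insertNone L.toFinset, F i).Nonempty := by
      refine Convex.helly_theorem_of_pairwise_inter (fun i _ => ?_) fun i hi j hj => ?_
      · cases i
        exacts [convex_Ici 0, Atom.convex_delaySet w _]
      · cases i <;> cases j <;> simp_all [F, inter_comm]
    simp only [mem_iInter] at hδ
    exact ⟨δ, hδ none (by simp), fun a ha => hδ (some a) (by simpa using ha)⟩

theorem elapse_satSet (L : List (Atom X)) :
    elapse (satSet L) = satSet
      (L.flatMap Atom.elapseConstraints ++ L.flatMap fun a => L.flatMap a.meetConstraints) := by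
  ext w
  simp only [mem_elapse_satSet_iff, satSet_append, mem_inter_iff, mem_satSet_flatMap,
    Atom.mem_satSet_elapseConstraints, Atom.mem_satSet_meetConstraints]

end Elapse

/-- The time elapse of a zone is a zone: if `Z` is definable by a finite
conjunction of atomic constraints, then so is `→Z`. -/
theorem stmt1 {X : Type*} (Z : Set (Val X))
    (hZ : ∃ L : List (Atom X), Z = satSet L) :
    ∃ L' : List (Atom X), elapse Z = satSet L' := by
  obtain ⟨L, rfl⟩ := hZ
  exact ⟨_, elapse_satSet L⟩
end

section
/- In a pushdown timed automaton, every run from a configuration with empty stack to a configuration with empty stack whose last discrete transition is a pop decomposes uniquely at the matching push: there is an index i such that the stack is empty at step i, the (i+1)-th configuration's stack is a single symbol a pushed at step i, the stack height stays at least 1 strictly between i+1 and the final pop, and the final pop removes that same symbol a. -/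
open Classical

/-- Stack operations of a pushdown timed automaton. -/
inductive StackOp (Γ : Type*) where
  | nop : StackOp Γ
  | push (a : Γ) : StackOp Γ
  | pop (a : Γ) : StackOp Γ

/-- A pushdown timed automaton, given by its set of transitions
`(q, g, op, R, q')`. -/
structure PDTA (Q X Γ : Type*) where
  trans : Set (Q × Set (Val X) × StackOp Γ × Set X × Q)

/-- Configurations `(q, v, χ)` of a PDTA. -/
abbrev Config (Q X Γ : Type*) := Q × Val X × List Γ

/-- Effect of a stack operation (top of the stack is the last element). -/
def opOK {Γ : Type*} : StackOp Γ → List Γ → List Γ → Prop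
  | .nop, χ, χ' => χ' = χ
  | .push a, χ, χ' => χ' = χ ++ [a]
  | .pop a, χ, χ' => χ = χ' ++ [a]

/-- One step of the PDTA semantics: a time delay or a discrete transition. -/
inductive PStep {Q X Γ : Type*} (A : PDTA Q X Γ) : Config Q X Γ → Config Q X Γ → Prop
  | delay (q : Q) (v : Val X) (χ : List Γ) (δ : ℝ) (hδ : 0 ≤ δ) :
      PStep A (q, v, χ) (q, addD v δ, χ)
  | disc (q q' : Q) (g : Set (Val X)) (op : StackOp Γ) (R : Set X) (v : Val X)
      (χ χ' : List Γ) (ht : (q, g, op, R, q') ∈ A.trans) (hg : v ∈ g)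
      (hop : opOK op χ χ') :
      PStep A (q, v, χ) (q', resetV R v, χ')

/-- `c 0, c 1, …, c n` is a run of the PDTA `A`. -/
def IsRun {Q X Γ : Type*} (A : PDTA Q X Γ) (n : ℕ) (c : ℕ → Config Q X Γ) : Prop :=
  ∀ k < n, PStep A (c k) (c (k + 1))

/-!
The matching push is the last step before the final pop at which the stack is empty: the step
leaving it pushes a single symbol `a`, and as long as the stack stays nonempty no step can change
its bottom symbol (the head of the list), so the stack `[b]` before the final pop forces `a = b`.
-/

namespace PStep

variable {Q X Γ : Type*} {A : PDTA Q X Γ} {c c' : Config Q X Γ}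

theorem stack_cases (h : PStep A c c') :
    c'.2.2 = c.2.2 ∨ (∃ a, c'.2.2 = c.2.2 ++ [a]) ∨ ∃ a, c.2.2 = c'.2.2 ++ [a] := by
  cases h with
  | delay => exact Or.inl rfl
  | disc _ _ _ op _ _ _ _ _ _ hop =>
    cases op with
    | nop => exact Or.inl hop
    | push a => exact Or.inr (Or.inl ⟨a, hop⟩)
    | pop a => exact Or.inr (Or.inr ⟨a, hop⟩)

theorem head?_eq (h : PStep A c c') (hc : c.2.2 ≠ []) (hc' : c'.2.2 ≠ []) :
    c'.2.2.head? = c.2.2.head? := by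
  rcases h.stack_cases with h | ⟨a, h⟩ | ⟨a, h⟩
  · rw [h]
  · rw [h, List.head?_append_of_ne_nil _ hc]
  · rw [h, List.head?_append_of_ne_nil _ hc']

theorem exists_eq_singleton_of_nil (h : PStep A c c') (hc : c.2.2 = []) (hc' : c'.2.2 ≠ []) :
    ∃ a, c'.2.2 = [a] := by
  rcases h.stack_cases with h | ⟨a, h⟩ | ⟨a, h⟩
  · exact absurd (h.trans hc) hc'
  · exact ⟨a, by rw [h, hc, List.nil_append]⟩
  · simp [hc] at h

end PStep

theorem IsRun.head?_eq_of_ne_nil {Q X Γ : Type*} {A : PDTA Q X Γ} {n : ℕ}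
    {c : ℕ → Config Q X Γ} (hrun : IsRun A n c) {i m : ℕ} (him : i ≤ m) (hmn : m ≤ n)
    (hne : ∀ k, i ≤ k → k ≤ m → (c k).2.2 ≠ []) :
    (c m).2.2.head? = (c i).2.2.head? := by
  induction m, him using Nat.le_induction with
  | base => rfl
  | succ m hm ih =>
    rw [(hrun m (by omega)).head?_eq (hne m hm m.le_succ) (hne (m + 1) (by omega) le_rfl),
      ih (by omega) fun k hik hkm => hne k hik (by omega)]

theorem stmt7_general {Q X Γ : Type*} (A : PDTA Q X Γ) (n : ℕ) (c : ℕ → Config Q X Γ)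
    (b : Γ) (hrun : IsRun A n c)
    (h0 : (c 0).2.2 = ([] : List Γ))
    (hpop : (c (n - 1)).2.2 = [b]) :
    ∃! i : ℕ, i + 1 < n ∧ (c i).2.2 = ([] : List Γ) ∧ (c (i + 1)).2.2 = [b] ∧
      ∀ k, i < k → k < n → (c k).2.2 ≠ ([] : List Γ) := by
  let P : ℕ → Prop := fun k => (c k).2.2 = []
  set i := Nat.findGreatest P (n - 1)
  have hi : (c i).2.2 = [] := Nat.findGreatest_spec (P := P) (Nat.zero_le _) h0
  have hin : i < n - 1 := (Nat.findGreatest_le _).lt_of_ne fun h : i = n - 1 => by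
    rw [h, hpop] at hi
    exact List.cons_ne_nil _ _ hi
  have hne : ∀ k, i < k → k < n → (c k).2.2 ≠ [] := fun k hik _ =>
    Nat.findGreatest_is_greatest hik (by omega)
  obtain ⟨a, ha⟩ :=
    (hrun i (by omega)).exists_eq_singleton_of_nil hi (hne (i + 1) i.lt_succ_self (by omega))
  have hab : a = b := by
    have := hrun.head?_eq_of_ne_nil (by omega : i + 1 ≤ n - 1) (by omega)
      fun k _ _ => hne k (by omega) (by omega)
    simpa [hpop, ha] using this.symm
  refine ⟨i, ⟨by omega, hi, hab ▸ ha, hne⟩, fun j ⟨hjn, hj, _, hjne⟩ => ?_⟩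
  rcases lt_trichotomy j i with hji | rfl | hij
  · exact absurd hi (hjne i hji (by omega))
  · rfl
  · exact absurd hj (hne j hij (by omega))

/-- A well-nested run whose last step is a pop (of the symbol `b`) decomposes
uniquely at the matching push: there is a unique index `i` such that the stack
is empty at `i`, at `i+1` it is the single symbol `b` (pushed at step `i`),
and the stack stays nonempty strictly between `i+1` and the final pop, which
removes that same symbol `b`. -/
theorem stmt7 {Q X Γ : Type*} (A : PDTA Q X Γ) (n : ℕ) (c : ℕ → Config Q X Γ)
    (b : Γ) (hn : 1 ≤ n) (hrun : IsRun A n c)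
    (h0 : (c 0).2.2 = ([] : List Γ))
    (hend : (c n).2.2 = ([] : List Γ))
    (hpop : (c (n - 1)).2.2 = [b]) :
    ∃! i : ℕ, i + 1 < n ∧ (c i).2.2 = ([] : List Γ) ∧ (c (i + 1)).2.2 = [b] ∧
      ∀ k, i < k → k < n → (c k).2.2 ≠ ([] : List Γ) :=
  stmt7_general A n c b hrun h0 hpop
end

section
/- Finiteness of the fixed point for PDTA rules: if the simulation ≼ is strongly finite (the induced equivalence ∼ has finite index), then in any (possibly transfinite) application of the Start/Internal/Push/Pop inductive rules, the root set 𝔖 remains finite and each set S_{(q,Z)} for (q,Z) ∈ 𝔖 remains finite; hence a fixed point is reached in finitely many rule applications. -/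
open Classical

/-- `sim` is a simulation relation on configurations of the PDTA `A`
(stack-independent, compatible with delays, guards and resets). -/
def IsSim {Q X Γ : Type*} (A : PDTA Q X Γ) (sim : Q → Val X → Val X → Prop) : Prop :=
  (∀ q (v v' : Val X) (δ : ℝ), 0 ≤ δ → sim q v v' → sim q (addD v δ) (addD v' δ)) ∧
  (∀ q q' g op R, (q, g, op, R, q') ∈ A.trans → ∀ v v', sim q v v' → v ∈ g →
    v' ∈ g ∧ sim q' (resetV R v) (resetV R v'))

/-- Lifting of a simulation to sets of valuations: `Z ≼_q Z'`. -/
def preZ {Q X : Type*} (sim : Q → Val X → Val X → Prop) (q : Q)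
    (Z Z' : Set (Val X)) : Prop :=
  ∀ v ∈ Z, ∃ v' ∈ Z', sim q v v'

/-- Equivalence induced by the simulation preorder: `Z ∼_q Z'`. -/
def eqvZ {Q X : Type*} (sim : Q → Val X → Val X → Prop) (q : Q)
    (Z Z' : Set (Val X)) : Prop :=
  preZ sim q Z Z' ∧ preZ sim q Z' Z

/-- Nodes of the zone graph. -/
abbrev Node (Q X : Type*) := Q × Set (Val X)

/-- A state of the rule-based fixed point computation: a set `𝒮` of pairs
`[(q,Z),(q',Z')]` meaning `(q,Z) ∈ 𝔖` and `(q',Z') ∈ S_{(q,Z)}`. -/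
abbrev RState (Q X : Type*) := Set (Node Q X × Node Q X)

/-- The Internal, Push and Pop inductive rules (the Start rule corresponds to
the initial state `{((q₀,Z₀),(q₀,Z₀))}`). -/
inductive RuleStep {Q X Γ : Type*} (A : PDTA Q X Γ) (sim : Q → Val X → Val X → Prop) :
    RState Q X → RState Q X → Prop
  | internal {𝒮 : RState Q X} {q q' q'' : Q} {Z Z' : Set (Val X)}
      {g : Set (Val X)} {R : Set X}
      (h1 : ((q, Z), (q', Z')) ∈ 𝒮)
      (ht : (q', g, StackOp.nop, R, q'') ∈ A.trans)
      (hne : succZ g R Z' ≠ ∅)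
      (hnew : ¬ ∃ Z''', ((q, Z), (q'', Z''')) ∈ 𝒮 ∧ preZ sim q'' (succZ g R Z') Z''') :
      RuleStep A sim 𝒮 (insert ((q, Z), (q'', succZ g R Z')) 𝒮)
  | push {𝒮 : RState Q X} {q q' q'' : Q} {Z Z' : Set (Val X)} {a : Γ}
      {g : Set (Val X)} {R : Set X}
      (h1 : ((q, Z), (q', Z')) ∈ 𝒮)
      (ht : (q', g, StackOp.push a, R, q'') ∈ A.trans)
      (hne : succZ g R Z' ≠ ∅)
      (hnew : ¬ ∃ Z''', (∃ nd, ((q'', Z'''), nd) ∈ 𝒮) ∧ eqvZ sim q'' (succZ g R Z') Z''') :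
      RuleStep A sim 𝒮 (insert ((q'', succZ g R Z'), (q'', succZ g R Z')) 𝒮)
  | pop {𝒮 : RState Q X} {q q' q'' q₁' q₂ : Q}
      {Z Z' Z₁ Z₁' : Set (Val X)} {a : Γ}
      {g g₁ : Set (Val X)} {R R₁ : Set X}
      (h1 : ((q, Z), (q', Z')) ∈ 𝒮)
      (h2 : ((q'', Z₁), (q₁', Z₁')) ∈ 𝒮)
      (ht : (q', g, StackOp.push a, R, q'') ∈ A.trans)
      (ht1 : (q₁', g₁, StackOp.pop a, R₁, q₂) ∈ A.trans)
      (heq : eqvZ sim q'' (succZ g R Z') Z₁)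
      (hne : succZ g₁ R₁ Z₁' ≠ ∅)
      (hnew : ¬ ∃ Z₂', ((q, Z), (q₂, Z₂')) ∈ 𝒮 ∧ preZ sim q₂ (succZ g₁ R₁ Z₁') Z₂') :
      RuleStep A sim 𝒮 (insert ((q, Z), (q₂, succZ g₁ R₁ Z₁')) 𝒮)

/-!
Call a set of nodes separated if two of its nodes with the same state and `∼`-equivalent zones
are equal. Every rule application preserves the invariant that the roots are separated and so
is each `S_{(q,Z)}`: the Push rule only adds a root that is not equivalent to an existing one,
and the Internal and Pop rules only add a node that is not simulated by a node of the same
state already in `S_{(q,Z)}`. Since `∼_q` has finitely many classes and `Q` is finite, a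
separated set of nodes is finite, because sending `(q, Z)` to `q` and the class of `Z` is
injective on it. Each rule adds a new entry, so an infinite run of rules would give a strictly
increasing chain of sets; its union still satisfies the invariant, so it is finite, and
a finite set has no strictly increasing chain of subsets.
-/

section Development

open Set

variable {Q X Γ : Type*} {sim : Q → Val X → Val X → Prop}

section Zones

variable {q : Q} {Z Z₁ Z₂ Z₃ : Set (Val X)}

theorem preZ_refl (hrefl : ∀ q (v : Val X), sim q v v) (q : Q) (Z : Set (Val X)) :
    preZ sim q Z Z :=
  fun v hv => ⟨v, hv, hrefl q v⟩

theorem preZ_trans (htrans : ∀ q (v₁ v₂ v₃ : Val X), sim q v₁ v₂ → sim q v₂ v₃ → sim q v₁ v₃)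
    (h₁₂ : preZ sim q Z₁ Z₂) (h₂₃ : preZ sim q Z₂ Z₃) : preZ sim q Z₁ Z₃ := by
  intro v hv
  obtain ⟨w, hw, hvw⟩ := h₁₂ v hv
  obtain ⟨u, hu, hwu⟩ := h₂₃ w hw
  exact ⟨u, hu, htrans q v w u hvw hwu⟩

theorem eqvZ_refl (hrefl : ∀ q (v : Val X), sim q v v) (q : Q) (Z : Set (Val X)) :
    eqvZ sim q Z Z :=
  ⟨preZ_refl hrefl q Z, preZ_refl hrefl q Z⟩

theorem eqvZ.symm (h : eqvZ sim q Z₁ Z₂) : eqvZ sim q Z₂ Z₁ :=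
  ⟨h.2, h.1⟩

theorem eqvZ.trans (htrans : ∀ q (v₁ v₂ v₃ : Val X), sim q v₁ v₂ → sim q v₂ v₃ → sim q v₁ v₃)
    (h₁₂ : eqvZ sim q Z₁ Z₂) (h₂₃ : eqvZ sim q Z₂ Z₃) : eqvZ sim q Z₁ Z₃ :=
  ⟨preZ_trans htrans h₁₂.1 h₂₃.1, preZ_trans htrans h₂₃.2 h₁₂.2⟩

end Zones

section Separated

/-- `∼_q` has finite index for every `q`: some finite `T` meets every class. -/
def StronglyFinite (sim : Q → Val X → Val X → Prop) : Prop :=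
  ∀ q : Q, ∃ T : Set (Set (Val X)), T.Finite ∧ ∀ Z : Set (Val X), ∃ Z' ∈ T, eqvZ sim q Z Z'

def NodesSeparated (sim : Q → Val X → Val X → Prop) (n n' : Node Q X) : Prop :=
  n.1 = n'.1 → eqvZ sim n.1 n.2 n'.2 → n = n'

def EntriesSeparated (sim : Q → Val X → Val X → Prop) (e e' : Node Q X × Node Q X) : Prop :=
  NodesSeparated sim e.1 e'.1 ∧ (e.1 = e'.1 → NodesSeparated sim e.2 e'.2)

instance : Std.Symm (NodesSeparated sim) where
  symm := by
    rintro ⟨q, Z⟩ ⟨q', Z'⟩ h (rfl : q' = q) hZ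
    exact (h rfl hZ.symm).symm

instance : Std.Refl (NodesSeparated sim) where
  refl _ _ _ := rfl

instance : Std.Symm (EntriesSeparated sim) where
  symm _ _ h := ⟨Std.Symm.symm _ _ h.1, fun hr => Std.Symm.symm _ _ (h.2 hr.symm)⟩

instance : Std.Refl (EntriesSeparated sim) where
  refl _ := ⟨Std.Refl.refl _, fun _ => Std.Refl.refl _⟩

theorem finite_of_pairwise_nodesSeparated [Finite Q]
    (htrans : ∀ q (v₁ v₂ v₃ : Val X), sim q v₁ v₂ → sim q v₂ v₃ → sim q v₁ v₃)
    (hsf : StronglyFinite sim) {S : Set (Node Q X)} (hS : S.Pairwise (NodesSeparated sim)) :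
    S.Finite := by
  choose T hTfin hTrep using hsf
  choose rep hrepT hrep using hTrep
  refine Finite.of_finite_image (f := fun n => (n.1, rep n.1 n.2))
    ((finite_univ.prod (finite_iUnion hTfin)).subset ?_) ?_
  · rintro _ ⟨n, -, rfl⟩
    exact ⟨trivial, mem_iUnion.2 ⟨n.1, hrepT _ _⟩⟩
  · rintro ⟨q, Z⟩ hn ⟨q', Z'⟩ hn' hκ
    obtain ⟨rfl, hZ⟩ := Prod.mk.inj hκ
    have hZZ' : eqvZ sim q Z Z' := (hrep q Z).trans htrans (hZ ▸ (hrep q Z').symm)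
    exact hS.of_refl hn hn' rfl hZZ'

variable {𝒮 : RState Q X}

theorem finite_roots_of_pairwise_entriesSeparated [Finite Q]
    (htrans : ∀ q (v₁ v₂ v₃ : Val X), sim q v₁ v₂ → sim q v₂ v₃ → sim q v₁ v₃)
    (hsf : StronglyFinite sim) (h𝒮 : 𝒮.Pairwise (EntriesSeparated sim)) :
    {r : Node Q X | ∃ n, (r, n) ∈ 𝒮}.Finite := by
  refine finite_of_pairwise_nodesSeparated htrans hsf ?_
  rintro r ⟨n, hrn⟩ r' ⟨n', hrn'⟩ -
  exact (h𝒮.of_refl hrn hrn').1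

theorem finite_nodes_of_pairwise_entriesSeparated [Finite Q]
    (htrans : ∀ q (v₁ v₂ v₃ : Val X), sim q v₁ v₂ → sim q v₂ v₃ → sim q v₁ v₃)
    (hsf : StronglyFinite sim) (h𝒮 : 𝒮.Pairwise (EntriesSeparated sim)) (r : Node Q X) :
    {n : Node Q X | (r, n) ∈ 𝒮}.Finite := by
  refine finite_of_pairwise_nodesSeparated htrans hsf ?_
  intro n hn n' hn' _
  exact (h𝒮.of_refl hn hn').2 rfl

theorem finite_of_pairwise_entriesSeparated [Finite Q]
    (htrans : ∀ q (v₁ v₂ v₃ : Val X), sim q v₁ v₂ → sim q v₂ v₃ → sim q v₁ v₃)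
    (hsf : StronglyFinite sim) (h𝒮 : 𝒮.Pairwise (EntriesSeparated sim)) : 𝒮.Finite := by
  have hroots := finite_roots_of_pairwise_entriesSeparated htrans hsf h𝒮
  refine (hroots.prod (hroots.biUnion fun r _ =>
    finite_nodes_of_pairwise_entriesSeparated htrans hsf h𝒮 r)).subset ?_
  rintro ⟨r, n⟩ hrn
  exact ⟨⟨n, hrn⟩, mem_biUnion ⟨n, hrn⟩ hrn⟩

end Separated

section Rules

variable {𝒮 𝒮' : RState Q X} {r n₀ : Node Q X} {q : Q} {Z : Set (Val X)}

theorem pairwise_entriesSeparated_insert_of_not_subsumed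
    (h𝒮 : 𝒮.Pairwise (EntriesSeparated sim)) (hr : (r, n₀) ∈ 𝒮)
    (hnew : ¬ ∃ Z', (r, (q, Z')) ∈ 𝒮 ∧ preZ sim q Z Z') :
    (insert (r, (q, Z)) 𝒮).Pairwise (EntriesSeparated sim) := by
  refine pairwise_insert_of_symm.2 ⟨h𝒮, ?_⟩
  rintro ⟨r', q', Z'⟩ he -
  refine ⟨(h𝒮.of_refl hr he).1, ?_⟩
  rintro (rfl : r = r') (rfl : q = q') hZ
  exact (hnew ⟨Z', he, hZ.1⟩).elim

theorem pairwise_entriesSeparated_insert_of_new_root (hrefl : ∀ q (v : Val X), sim q v v)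
    (h𝒮 : 𝒮.Pairwise (EntriesSeparated sim))
    (hnew : ¬ ∃ Z', (∃ n, ((q, Z'), n) ∈ 𝒮) ∧ eqvZ sim q Z Z') (n : Node Q X) :
    (insert ((q, Z), n) 𝒮).Pairwise (EntriesSeparated sim) := by
  refine pairwise_insert_of_symm.2 ⟨h𝒮, ?_⟩
  rintro ⟨⟨q', Z'⟩, n'⟩ he -
  refine ⟨?_, ?_⟩
  · rintro (rfl : q = q') hZ
    exact (hnew ⟨Z', ⟨n', he⟩, hZ⟩).elim
  · rintro ⟨⟩
    exact (hnew ⟨Z, ⟨n', he⟩, eqvZ_refl hrefl q Z⟩).elim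

variable {A : PDTA Q X Γ}

theorem RuleStep.pairwise_entriesSeparated (hrefl : ∀ q (v : Val X), sim q v v)
    (h : RuleStep A sim 𝒮 𝒮') (h𝒮 : 𝒮.Pairwise (EntriesSeparated sim)) :
    𝒮'.Pairwise (EntriesSeparated sim) := by
  cases h with
  | internal h1 _ _ hnew => exact pairwise_entriesSeparated_insert_of_not_subsumed h𝒮 h1 hnew
  | push _ _ _ hnew => exact pairwise_entriesSeparated_insert_of_new_root hrefl h𝒮 hnew _
  | pop h1 _ _ _ _ _ hnew => exact pairwise_entriesSeparated_insert_of_not_subsumed h𝒮 h1 hnew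

theorem RuleStep.ssubset (hrefl : ∀ q (v : Val X), sim q v v) (h : RuleStep A sim 𝒮 𝒮') :
    𝒮 ⊂ 𝒮' := by
  cases h with
  | internal _ _ _ hnew => exact ssubset_insert fun he => hnew ⟨_, he, preZ_refl hrefl _ _⟩
  | push _ _ _ hnew => exact ssubset_insert fun he => hnew ⟨_, ⟨_, he⟩, eqvZ_refl hrefl _ _⟩
  | pop _ _ _ _ _ _ hnew => exact ssubset_insert fun he => hnew ⟨_, he, preZ_refl hrefl _ _⟩

theorem pairwise_entriesSeparated_of_reflTransGen (hrefl : ∀ q (v : Val X), sim q v v)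
    (h : Relation.ReflTransGen (RuleStep A sim) {(r, r)} 𝒮) :
    𝒮.Pairwise (EntriesSeparated sim) := by
  induction h with
  | refl => exact pairwise_singleton _ _
  | tail _ hstep ih => exact hstep.pairwise_entriesSeparated hrefl ih

end Rules

theorem not_strictMono_of_subset_finite {α : Type*} {U : Set α} (hU : U.Finite)
    {f : ℕ → Set α} (hf : ∀ m, f m ⊆ U) : ¬ StrictMono f := fun hmono =>
  infinite_range_of_injective hmono.injective
    (hU.finite_subsets.subset (range_subset_iff.2 hf))

end Development

/-- Finiteness of the fixed point computation: if the simulation preorder is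
strongly finite (the induced equivalence `∼_q` has finite index for each `q`),
then in any application of the Start/Internal/Push/Pop rules the set of roots
and each set `S_{(q,Z)}` remain finite, and no infinite sequence of rule
applications exists, so a fixed point is reached in finitely many steps. -/
theorem stmt10 {Q X Γ : Type*} [Finite Q] (A : PDTA Q X Γ)
    (sim : Q → Val X → Val X → Prop)
    (hrefl : ∀ q (v : Val X), sim q v v)
    (htrans : ∀ q (v₁ v₂ v₃ : Val X), sim q v₁ v₂ → sim q v₂ v₃ → sim q v₁ v₃)
    (hsf : ∀ q : Q, ∃ T : Set (Set (Val X)), T.Finite ∧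
      ∀ Z : Set (Val X), ∃ Z' ∈ T, eqvZ sim q Z Z')
    (q₀ : Q) (Z₀ : Set (Val X)) :
    (∀ 𝒮 : RState Q X,
      Relation.ReflTransGen (RuleStep A sim) {((q₀, Z₀), (q₀, Z₀))} 𝒮 →
        ({r : Node Q X | ∃ nd, (r, nd) ∈ 𝒮}).Finite ∧
        ∀ r : Node Q X, ({nd : Node Q X | (r, nd) ∈ 𝒮}).Finite) ∧
    ¬ ∃ f : ℕ → RState Q X, f 0 = {((q₀, Z₀), (q₀, Z₀))} ∧
        ∀ m, RuleStep A sim (f m) (f (m + 1)) := by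
  refine ⟨fun 𝒮 h => ?_, ?_⟩
  · have h𝒮 := pairwise_entriesSeparated_of_reflTransGen hrefl h
    exact ⟨finite_roots_of_pairwise_entriesSeparated htrans hsf h𝒮,
      finite_nodes_of_pairwise_entriesSeparated htrans hsf h𝒮⟩
  · rintro ⟨f, h0, hf⟩
    have hmono : StrictMono f := strictMono_nat_of_lt_succ fun m => (hf m).ssubset hrefl
    have hreach : ∀ m, Relation.ReflTransGen (RuleStep A sim) {((q₀, Z₀), (q₀, Z₀))} (f m) := by
      intro m
      induction m with
      | zero => rw [h0]
      | succ m ih => exact ih.tail (hf m)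
    have hunion : (⋃ m, f m).Pairwise (EntriesSeparated sim) :=
      (Set.pairwise_iUnion hmono.monotone.directed_le).2 fun m =>
        pairwise_entriesSeparated_of_reflTransGen hrefl (hreach m)
    exact not_strictMono_of_subset_finite (finite_of_pairwise_entriesSeparated htrans hsf hunion)
      (Set.subset_iUnion f) hmono
end

section
/- Soundness of the PDTA inductive rules: the invariant "for all (q,Z) ∈ 𝔖, (q',Z') ∈ S_{(q,Z)}, and v' ∈ Z', there is a run (q,v,ε) →* (q',v'',ε) with v ∈ Z and (q',v') ≼ (q',v'')" holds after the Start rule and is preserved by each application of the Internal, Push, and Pop rules; hence it holds at any fixed point. -/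
open Classical

/-!
Each rule adds a summary `((q,Z),(q',Z'))` built from summaries already present, and the
corresponding run is glued from their runs. The runs of the earlier summaries only end in
valuations simulating the ones needed next, so each piece is replayed from a simulating
valuation: a simulation transports whole runs, stack contents included. For Pop, the run of the
inner summary starts in `Z₁`, which is only `∼`-equivalent to the successor zone reached by the
Push transition; it is executed on top of the pushed symbol, which it never inspects.
-/

section Runs

variable {Q X Γ : Type*} (A : PDTA Q X Γ)

theorem IsRun.exists_of_reflTransGen {c₁ c₂ : Config Q X Γ}
    (h : Relation.ReflTransGen (PStep A) c₁ c₂) :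
    ∃ n c, IsRun A n c ∧ c 0 = c₁ ∧ c n = c₂ := by
  induction h with
  | refl => exact ⟨0, fun _ => c₁, fun k hk => absurd hk (Nat.not_lt_zero k), rfl, rfl⟩
  | @tail b c _ hbc ih =>
    obtain ⟨n, e, hrun, h0, hn⟩ := ih
    refine ⟨n + 1, fun k => if k ≤ n then e k else c, fun k hk => ?_, by simp [h0], by simp⟩
    rcases Nat.lt_or_ge k n with hkn | hkn
    · simpa [hkn.le, Nat.succ_le_of_lt hkn] using hrun k hkn
    · obtain rfl : k = n := by omega
      simpa [hn] using hbc

/-- Pushing a symbol at the bottom of the stack. -/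
def consStack (a : Γ) (c : Config Q X Γ) : Config Q X Γ := (c.1, c.2.1, a :: c.2.2)

theorem PStep.consStack {a : Γ} {c c' : Config Q X Γ} (h : PStep A c c') :
    PStep A (consStack a c) (consStack a c') := by
  cases h with
  | delay _ _ _ δ hδ => exact .delay _ _ _ δ hδ
  | disc _ _ g op R _ _ _ ht hg hop =>
    refine .disc _ _ g op R _ _ _ ht hg ?_
    cases op <;> simp_all [opOK]

theorem reflTransGen_consStack {a : Γ} {c c' : Config Q X Γ}
    (h : Relation.ReflTransGen (PStep A) c c') :
    Relation.ReflTransGen (PStep A) (consStack a c) (consStack a c') :=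
  Relation.ReflTransGen.lift (consStack a) (fun _ _ => PStep.consStack A) _ _ h

theorem reflTransGen_of_mem_succZ {q q' : Q} {g : Set (Val X)} {op : StackOp Γ} {R : Set X}
    (ht : (q, g, op, R, q') ∈ A.trans) {χ χ' : List Γ} (hop : opOK op χ χ')
    {Z : Set (Val X)} {v' : Val X} (hv' : v' ∈ succZ g R Z) :
    ∃ u ∈ Z, Relation.ReflTransGen (PStep A) (q, u, χ) (q', v', χ') := by
  obtain ⟨_, ⟨u, ⟨hug, huZ⟩, rfl⟩, δ, hδ, rfl⟩ := hv'
  exact ⟨u, huZ, .tail (.single (.disc _ _ g op R u χ χ' ht hug hop)) (.delay _ _ _ δ hδ)⟩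

variable {A} {sim : Q → Val X → Val X → Prop}

theorem PStep.exists_sim (hsim : IsSim A sim) {c c' : Config Q X Γ} (h : PStep A c c')
    {w : Val X} (hw : sim c.1 c.2.1 w) :
    ∃ w', PStep A (c.1, w, c.2.2) (c'.1, w', c'.2.2) ∧ sim c'.1 c'.2.1 w' := by
  cases h with
  | delay _ _ _ δ hδ => exact ⟨addD w δ, .delay _ _ _ δ hδ, hsim.1 _ _ _ δ hδ hw⟩
  | disc _ _ g op R _ _ _ ht hg hop =>
    obtain ⟨hwg, hR⟩ := hsim.2 _ _ _ _ _ ht _ _ hw hg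
    exact ⟨resetV R w, .disc _ _ g op R w _ _ ht hwg hop, hR⟩

theorem exists_sim_of_reflTransGen (hsim : IsSim A sim) {c c' : Config Q X Γ}
    (h : Relation.ReflTransGen (PStep A) c c') {w : Val X} (hw : sim c.1 c.2.1 w) :
    ∃ w', Relation.ReflTransGen (PStep A) (c.1, w, c.2.2) (c'.1, w', c'.2.2) ∧
      sim c'.1 c'.2.1 w' := by
  induction h with
  | refl => exact ⟨w, .refl, hw⟩
  | tail _ hbc ih =>
    obtain ⟨w₁, hrun, hw₁⟩ := ih
    obtain ⟨w₂, hstep, hw₂⟩ := hbc.exists_sim hsim hw₁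
    exact ⟨w₂, hrun.tail hstep, hw₂⟩

end Runs

section Rules

variable {Q X Γ : Type*} {A : PDTA Q X Γ} {sim : Q → Val X → Val X → Prop}

variable (A sim) in
/-- The invariant of the rules for a single pair `((q,Z),(q',Z'))`, i.e. `(q',Z') ∈ S_{(q,Z)}`. -/
def SoundSummary (e : Node Q X × Node Q X) : Prop :=
  ∀ v' ∈ e.2.2, ∃ v ∈ e.1.2, ∃ v'',
    Relation.ReflTransGen (PStep A) (e.1.1, v, ([] : List Γ)) (e.2.1, v'', []) ∧
      sim e.2.1 v' v''

theorem soundSummary_diag (hrefl : ∀ q (v : Val X), sim q v v) (q : Q) (Z : Set (Val X)) :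
    SoundSummary A sim ((q, Z), (q, Z)) :=
  fun v' hv' => ⟨v', hv', v', .refl, hrefl q v'⟩

theorem SoundSummary.internal (hsim : IsSim A sim) {q q' q'' : Q} {Z Z' : Set (Val X)}
    {g : Set (Val X)} {R : Set X} (h : SoundSummary A sim ((q, Z), (q', Z')))
    (ht : (q', g, StackOp.nop, R, q'') ∈ A.trans) :
    SoundSummary A sim ((q, Z), (q'', succZ g R Z')) := by
  intro v' hv'
  obtain ⟨u, huZ', hstep⟩ := reflTransGen_of_mem_succZ A ht (χ := []) rfl hv'
  obtain ⟨v, hv, w, hrun, huw⟩ := h u huZ'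
  obtain ⟨w', hstep', hv'w'⟩ := exists_sim_of_reflTransGen hsim hstep huw
  exact ⟨v, hv, w', hrun.trans hstep', hv'w'⟩

theorem SoundSummary.pop (hsim : IsSim A sim)
    (htrans : ∀ q (v₁ v₂ v₃ : Val X), sim q v₁ v₂ → sim q v₂ v₃ → sim q v₁ v₃)
    {q q' q'' q₁' q₂ : Q} {Z Z' Z₁ Z₁' : Set (Val X)} {a : Γ}
    {g g₁ : Set (Val X)} {R R₁ : Set X}
    (h : SoundSummary A sim ((q, Z), (q', Z')))
    (h₁ : SoundSummary A sim ((q'', Z₁), (q₁', Z₁')))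
    (ht : (q', g, StackOp.push a, R, q'') ∈ A.trans)
    (ht₁ : (q₁', g₁, StackOp.pop a, R₁, q₂) ∈ A.trans)
    (hZ₁ : preZ sim q'' Z₁ (succZ g R Z')) :
    SoundSummary A sim ((q, Z), (q₂, succZ g₁ R₁ Z₁')) := by
  intro v' hv'
  obtain ⟨u₁, hu₁, hpop⟩ := reflTransGen_of_mem_succZ A ht₁ (χ := [a]) (χ' := []) rfl hv'
  obtain ⟨w₁, hw₁, x, hinner, hu₁x⟩ := h₁ u₁ hu₁
  obtain ⟨y, hy, hw₁y⟩ := hZ₁ w₁ hw₁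
  obtain ⟨u, hu, hpush⟩ := reflTransGen_of_mem_succZ A ht (χ := []) (χ' := [a]) rfl hy
  obtain ⟨v, hv, w, hrun, huw⟩ := h u hu
  obtain ⟨y', hpush', hyy'⟩ := exists_sim_of_reflTransGen hsim hpush huw
  obtain ⟨x', hinner', hxx'⟩ := exists_sim_of_reflTransGen hsim
    (reflTransGen_consStack A (a := a) hinner) (htrans _ _ _ _ hw₁y hyy')
  obtain ⟨v'', hpop', hv'v''⟩ := exists_sim_of_reflTransGen hsim hpop (htrans _ _ _ _ hu₁x hxx')
  exact ⟨v, hv, v'', ((hrun.trans hpush').trans hinner').trans hpop', hv'v''⟩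

theorem RuleStep.soundSummary (hsim : IsSim A sim) (hrefl : ∀ q (v : Val X), sim q v v)
    (htrans : ∀ q (v₁ v₂ v₃ : Val X), sim q v₁ v₂ → sim q v₂ v₃ → sim q v₁ v₃)
    {𝒮 𝒮' : RState Q X} (hstep : RuleStep A sim 𝒮 𝒮')
    (h𝒮 : ∀ e ∈ 𝒮, SoundSummary A sim e) : ∀ e ∈ 𝒮', SoundSummary A sim e := by
  cases hstep with
  | internal h ht => exact Set.forall_mem_insert.2 ⟨(h𝒮 _ h).internal hsim ht, h𝒮⟩
  | push => exact Set.forall_mem_insert.2 ⟨soundSummary_diag hrefl _ _, h𝒮⟩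
  | pop h h₁ ht ht₁ heq =>
    exact Set.forall_mem_insert.2 ⟨(h𝒮 _ h).pop hsim htrans (h𝒮 _ h₁) ht ht₁ heq.2, h𝒮⟩

end Rules

/-- Soundness of the PDTA inductive rules: the invariant — for all
`(q,Z) ∈ 𝔖`, `(q',Z') ∈ S_{(q,Z)}` and `v' ∈ Z'`, there is a well-nested run
`(q,v,ε) →* (q',v'',ε)` with `v ∈ Z` and `(q',v') ≼ (q',v'')` — holds after
the Start rule and is preserved by the Internal/Push/Pop rules, hence holds
in every state (in particular any fixed point) reachable by the rules. -/
theorem stmt12 {Q X Γ : Type*} (A : PDTA Q X Γ) (sim : Q → Val X → Val X → Prop)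
    (hsim : IsSim A sim)
    (hrefl : ∀ q (v : Val X), sim q v v)
    (htrans : ∀ q (v₁ v₂ v₃ : Val X), sim q v₁ v₂ → sim q v₂ v₃ → sim q v₁ v₃)
    (q₀ : Q) (Z₀ : Set (Val X)) (𝒮 : RState Q X)
    (hreach : Relation.ReflTransGen (RuleStep A sim) {((q₀, Z₀), (q₀, Z₀))} 𝒮) :
    ∀ (q : Q) (Z : Set (Val X)) (q' : Q) (Z' : Set (Val X)),
      ((q, Z), (q', Z')) ∈ 𝒮 → ∀ v' ∈ Z',
        ∃ v ∈ Z, ∃ (n : ℕ) (c : ℕ → Config Q X Γ), IsRun A n c ∧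
          c 0 = (q, v, ([] : List Γ)) ∧
          ∃ v'' : Val X, c n = (q', v'', ([] : List Γ)) ∧ sim q' v' v'' := by
  have hsound : ∀ e ∈ 𝒮, SoundSummary (Γ := Γ) A sim e := by
    induction hreach with
    | refl => simpa using soundSummary_diag hrefl q₀ Z₀
    | tail _ hstep ih => exact hstep.soundSummary hsim hrefl htrans ih
  intro q Z q' Z' hmem v' hv'
  obtain ⟨v, hv, v'', hrun, hv'v''⟩ := hsound _ hmem v' hv'
  obtain ⟨n, c, hc, hc0, hcn⟩ := IsRun.exists_of_reflTransGen A hrun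
  exact ⟨v, hv, n, c, hc, hc0, v'', hcn, hv'v''⟩
end
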